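/- arXiv:2006.04366 — 2 statements merged into one kernel-verified Lean document; each statement's English description precedes it below -/
import Mathlib

section
/- Let μ be the law of an N×D random matrix X whose entries are i.i.d. standard Gaussian N(0,1), and let α ≥ 0. Then the expected regularized log-determinant satisfies ∫ log det(α·I_D + X(ω)ᵀ·X(ω)) dμ(ω) ≤ D · log(N + α). -/
/-!
For positive definite `M` and `c > 0`, the tangent-line bound `log t ≤ t / c + log c - 1` applied to
the eigenvalues gives `log det M ≤ tr M / c + D (log c - 1)`. With `M = α I + XᵀX` and `c = N + α`
the right-hand side has expectation `D log c`, because `E[XᵀX] = N I`.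

This needs `M` positive definite almost surely. That is automatic for `α > 0`. For `α = 0` and
`D ≤ N` the columns of `X` are almost surely linearly independent, since a Gaussian vector charges
no proper subspace. For `α = 0` and `N < D` the determinant vanishes identically and `log 0 = 0`.
-/

open Matrix Real MeasureTheory ProbabilityTheory

namespace Matrix

variable {m n : Type*} [Fintype m] [Fintype n]

theorem PosDef.log_det_le [DecidableEq n] {M : Matrix n n ℝ} (hM : M.PosDef) {c : ℝ}
    (hc : 0 < c) : Real.log M.det ≤ M.trace / c + Fintype.card n * (Real.log c - 1) := by
  have hpos := hM.eigenvalues_pos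
  have hlog (i : n) :
      Real.log (hM.1.eigenvalues i) ≤ hM.1.eigenvalues i / c + (Real.log c - 1) := by
    have := Real.log_le_sub_one_of_pos (div_pos (hpos i) hc)
    rw [Real.log_div (hpos i).ne' hc.ne'] at this
    linarith
  calc Real.log M.det = ∑ i, Real.log (hM.1.eigenvalues i) := by
        rw [hM.1.det_eq_prod_eigenvalues, ← Real.log_prod fun i _ => (hpos i).ne']
        simp
    _ ≤ ∑ i, (hM.1.eigenvalues i / c + (Real.log c - 1)) := Finset.sum_le_sum fun i _ => hlog i
    _ = M.trace / c + Fintype.card n * (Real.log c - 1) := by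
        rw [Finset.sum_add_distrib, ← Finset.sum_div, hM.1.trace_eq_sum_eigenvalues]
        simp
        ring

theorem posDef_smul_one_add_transpose_mul_self_of_pos [DecidableEq n] (A : Matrix m n ℝ) {α : ℝ}
    (hα : 0 < α) : (α • 1 + Aᵀ * A).PosDef :=
  (PosDef.one.smul hα).add_posSemidef (by simpa using posSemidef_conjTranspose_mul_self A)

theorem posDef_smul_one_add_transpose_mul_self_of_linearIndependent [DecidableEq n]
    {A : Matrix m n ℝ} (hA : LinearIndependent ℝ A.col) {α : ℝ} (hα : 0 ≤ α) :
    (α • 1 + Aᵀ * A).PosDef :=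
  PosDef.posSemidef_add (PosSemidef.one.smul hα)
    (by simpa using PosDef.conjTranspose_mul_self A (mulVec_injective_iff.2 hA))

theorem det_transpose_mul_self_eq_zero_of_card_lt [DecidableEq n] {K : Type*} [Field K] (A : Matrix m n K)
    (h : Fintype.card m < Fintype.card n) : (Aᵀ * A).det = 0 := by
  by_contra hdet
  have hrank := rank_of_isUnit _ ((isUnit_iff_isUnit_det _).2 (Ne.isUnit hdet))
  have := (rank_mul_le_left Aᵀ A).trans (rank_le_card_width Aᵀ)
  omega

theorem trace_transpose_mul_self {R : Type*} [CommSemiring R] (A : Matrix m n R) :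
    (Aᵀ * A).trace = ∑ i, ∑ j, A i j ^ 2 := by
  simp only [trace, diag, mul_apply, transpose_apply, sq]
  exact Finset.sum_comm

end Matrix

namespace MeasureTheory

theorem Measure.AbsolutelyContinuous.pi_fin :
    ∀ {n : ℕ} {α : Fin n → Type*} [∀ i, MeasurableSpace (α i)] {μ ν : ∀ i, Measure (α i)}
      [∀ i, SigmaFinite (μ i)] [∀ i, SigmaFinite (ν i)],
      (∀ i, μ i ≪ ν i) → Measure.pi μ ≪ Measure.pi ν
  | 0, _, _, μ, ν, _, _, _ => by rw [Measure.pi_of_empty μ, Measure.pi_of_empty ν]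
  | n + 1, α, _, μ, ν, _, _, h => by
    let e := MeasurableEquiv.piFinSuccAbove α 0
    rw [← e.map_symm_map (μ := Measure.pi μ), ← e.map_symm_map (μ := Measure.pi ν),
      (measurePreserving_piFinSuccAbove μ 0).map_eq, (measurePreserving_piFinSuccAbove ν 0).map_eq]
    exact ((h 0).prod (pi_fin fun i => h _)).map e.symm.measurable

theorem Measure.map_transpose_pi_pi {ι κ α : Type*} [Fintype ι] [Fintype κ] [MeasurableSpace α]
    (ν : Measure α) [IsProbabilityMeasure ν] :
    (Measure.pi fun _ : ι => Measure.pi fun _ : κ => ν).map (fun X j i => X i j) =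
      Measure.pi fun _ : κ => Measure.pi fun _ : ι => ν := by
  have htranspose : (fun (X : ι → κ → α) j i => X i j) =
      MeasurableEquiv.curry κ ι α ∘
        MeasurableEquiv.piCongrLeft (fun _ => α) (Equiv.prodComm ι κ) ∘
        (MeasurableEquiv.curry ι κ α).symm :=
    rfl
  simp_rw [← Measure.infinitePi_eq_pi]
  rw [htranspose, ← Measure.map_map (by fun_prop) (by fun_prop),
    ← Measure.map_map (by fun_prop) (by fun_prop), Measure.infinitePi_map_curry_symm,
    Measure.infinitePi_map_piCongrLeft (fun _ : κ × ι => ν) (Equiv.prodComm ι κ),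
    Measure.infinitePi_map_curry (fun (_ : κ) (_ : ι) => ν)]

theorem ae_linearIndependent_pi {V : Type*} [NormedAddCommGroup V] [NormedSpace ℝ V]
    [FiniteDimensional ℝ V] [MeasurableSpace V] [BorelSpace V] {ν : Measure V} [SigmaFinite ν]
    (hν : ∀ S : Submodule ℝ V, S ≠ ⊤ → ν S = 0) :
    ∀ {k : ℕ}, k ≤ Module.finrank ℝ V →
      ∀ᵐ v ∂(Measure.pi fun _ : Fin k => ν), LinearIndependent ℝ v
  | 0, _ => ae_of_all _ fun _ => linearIndependent_empty_type
  | k + 1, hk => by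
    let e := MeasurableEquiv.piFinSuccAbove (fun _ : Fin (k + 1) => V) 0
    have he (p : V × (Fin k → V)) : e.symm p = Fin.cons p.1 p.2 := Fin.insertNth_zero' _ _
    have hopen : IsOpen
        {p : V × (Fin k → V) | LinearIndependent ℝ (Fin.cons p.1 p.2 : Fin (k + 1) → V)} :=
      isOpen_setOfPred_linearIndependent.preimage (by fun_prop)
    rw [← e.map_symm_map (μ := Measure.pi _), (measurePreserving_piFinSuccAbove _ 0).map_eq,
      e.symm.measurableEmbedding.ae_map_iff]
    simp only [he]
    rw [Measure.ae_prod_iff_ae_ae hopen.measurableSet, Measure.ae_ae_comm hopen.measurableSet]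
    filter_upwards [ae_linearIndependent_pi hν (Nat.le_of_succ_le hk)] with v hv
    have hspan : Submodule.span ℝ (Set.range v) ≠ ⊤ := by
      intro htop
      have := finrank_range_le_card (R := ℝ) v
      rw [Set.finrank, htop, finrank_top, Fintype.card_fin] at this
      omega
    filter_upwards [measure_eq_zero_iff_ae_notMem.1 (hν _ hspan)] with x hx
    exact hv.finCons hx

end MeasureTheory

theorem ae_linearIndependent_col_pi_pi {N D : ℕ} (h : D ≤ N) {ν : Measure ℝ}
    [IsProbabilityMeasure ν] (hν : ν ≪ volume) :
    ∀ᵐ X ∂(Measure.pi fun _ : Fin N => Measure.pi fun _ : Fin D => ν),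
      LinearIndependent ℝ (Matrix.of X).col := by
  have hsub (S : Submodule ℝ (Fin N → ℝ)) (hS : S ≠ ⊤) :
      Measure.pi (fun _ : Fin N => ν) (S : Set (Fin N → ℝ)) = 0 := by
    have hvol : Measure.pi (fun _ : Fin N => (volume : Measure ℝ)) (S : Set (Fin N → ℝ)) = 0 :=
      Measure.addHaar_submodule _ S hS
    exact Measure.AbsolutelyContinuous.pi_fin (fun _ => hν) hvol
  have hcols := ae_linearIndependent_pi hsub (k := D) (by simpa using h)
  rw [← Measure.map_transpose_pi_pi] at hcols
  have htranspose : Measurable fun (X : Fin N → Fin D → ℝ) j i => X i j :=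
    measurable_pi_lambda _ fun j => measurable_pi_lambda _ fun i =>
      (measurable_pi_apply j).comp (measurable_pi_apply i)
  filter_upwards [ae_of_ae_map htranspose.aemeasurable hcols] with X hX
  exact hX

theorem ae_posDef_smul_one_add_transpose_mul_self_pi_pi {N D : ℕ} {ν : Measure ℝ}
    [IsProbabilityMeasure ν] (hν : ν ≪ volume) {α : ℝ} (hα : 0 ≤ α) (h : 0 < α ∨ D ≤ N) :
    ∀ᵐ X ∂(Measure.pi fun _ : Fin N => Measure.pi fun _ : Fin D => ν),
      (α • (1 : Matrix (Fin D) (Fin D) ℝ) + (Matrix.of X)ᵀ * Matrix.of X).PosDef := by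
  rcases h with hα | hDN
  · exact ae_of_all _ fun X => posDef_smul_one_add_transpose_mul_self_of_pos _ hα
  · filter_upwards [ae_linearIndependent_col_pi_pi hDN hν] with X hX
    exact posDef_smul_one_add_transpose_mul_self_of_linearIndependent hX hα

section TraceMoment

variable {m n : Type*} [Fintype m] [Fintype n] {ν : Measure ℝ} [IsProbabilityMeasure ν]

theorem integrable_sq_apply_pi_pi (hν : Integrable (fun x => x ^ 2) ν) (i : m) (j : n) :
    Integrable (fun X : m → n → ℝ => X i j ^ 2) (Measure.pi fun _ => Measure.pi fun _ => ν) :=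
  integrable_comp_eval (μ := fun _ : m => Measure.pi fun _ : n => ν) (i := i)
    (f := fun r => r j ^ 2) (integrable_comp_eval (μ := fun _ : n => ν) (i := j) hν)

theorem integral_sq_apply_pi_pi (hν : Integrable (fun x => x ^ 2) ν) (i : m) (j : n) :
    ∫ X : m → n → ℝ, X i j ^ 2 ∂(Measure.pi fun _ => Measure.pi fun _ => ν) =
      ∫ x, x ^ 2 ∂ν := by
  rw [integral_comp_eval (μ := fun _ : m => Measure.pi fun _ : n => ν) (i := i)
      (f := fun r => r j ^ 2) (integrable_comp_eval (μ := fun _ : n => ν) (i := j) hν).1,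
    integral_comp_eval (μ := fun _ : n => ν) (i := j) (f := fun x => x ^ 2) hν.1]

theorem integrable_trace_smul_one_add_transpose_mul_self_pi_pi [DecidableEq n]
    (hν : Integrable (fun x => x ^ 2) ν) (α : ℝ) :
    Integrable
      (fun X : m → n → ℝ => (α • (1 : Matrix n n ℝ) + (Matrix.of X)ᵀ * Matrix.of X).trace)
      (Measure.pi fun _ => Measure.pi fun _ => ν) := by
  simp only [trace_add, trace_smul, trace_transpose_mul_self, Matrix.of_apply]
  exact (integrable_const _).add <| integrable_finsetSum _ fun i _ =>
    integrable_finsetSum _ fun j _ => integrable_sq_apply_pi_pi hν i j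

theorem integral_trace_smul_one_add_transpose_mul_self_pi_pi [DecidableEq n]
    (hν : Integrable (fun x => x ^ 2) ν) (α : ℝ) :
    ∫ X : m → n → ℝ, (α • (1 : Matrix n n ℝ) + (Matrix.of X)ᵀ * Matrix.of X).trace
        ∂(Measure.pi fun _ => Measure.pi fun _ => ν) =
      Fintype.card n * (Fintype.card m * ∫ x, x ^ 2 ∂ν + α) := by
  have hsum : Integrable (fun X : m → n → ℝ => ∑ i, ∑ j, X i j ^ 2)
      (Measure.pi fun _ => Measure.pi fun _ => ν) :=
    integrable_finsetSum _ fun i _ =>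
      integrable_finsetSum _ fun j _ => integrable_sq_apply_pi_pi hν i j
  simp only [trace_add, trace_smul, trace_one, trace_transpose_mul_self, Matrix.of_apply]
  rw [integral_add (integrable_const _) hsum, integral_finsetSum _ fun i _ =>
    integrable_finsetSum _ fun j _ => integrable_sq_apply_pi_pi hν i j]
  simp_rw [integral_finsetSum _ fun j _ => integrable_sq_apply_pi_pi hν _ j,
    integral_sq_apply_pi_pi hν]
  simp only [integral_const, probReal_univ, Finset.sum_const, Finset.card_univ, nsmul_eq_mul,
    smul_eq_mul]
  ring

end TraceMoment

theorem integrable_sq_gaussianReal : Integrable (fun x => x ^ 2) (gaussianReal 0 1) :=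
  (memLp_id_gaussianReal 2).integrable_sq

theorem integral_sq_gaussianReal : ∫ x, x ^ 2 ∂gaussianReal 0 1 = 1 := by
  rw [← variance_of_integral_eq_zero (X := fun x : ℝ => x) aemeasurable_id'
    integral_id_gaussianReal]
  exact variance_fun_id_gaussianReal

/-- A non-integrable integrand has integral `0`, hence `1 ≤ c` rather than `0 < c`. -/
theorem integral_log_det_le {n Ω : Type*} [Fintype n] [DecidableEq n] [MeasurableSpace Ω]
    {μ : Measure Ω} [IsProbabilityMeasure μ] {M : Ω → Matrix n n ℝ}
    (hM : ∀ᵐ ω ∂μ, (M ω).PosDef) (htr : Integrable (fun ω => (M ω).trace) μ) {c : ℝ}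
    (hc : 1 ≤ c) (hmean : ∫ ω, (M ω).trace ∂μ = Fintype.card n * c) :
    ∫ ω, Real.log (M ω).det ∂μ ≤ Fintype.card n * Real.log c := by
  have hc0 : 0 < c := by linarith
  by_cases hint : Integrable (fun ω => Real.log (M ω).det) μ
  · calc ∫ ω, Real.log (M ω).det ∂μ
          ≤ ∫ ω, ((M ω).trace / c + Fintype.card n * (Real.log c - 1)) ∂μ :=
          integral_mono_ae hint ((htr.div_const c).add (integrable_const _))
            (hM.mono fun ω h => h.log_det_le hc0)
      _ = Fintype.card n * Real.log c := by
          rw [integral_add (htr.div_const c) (integrable_const _), integral_div, hmean,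
            integral_const]
          field_simp
          simp
          ring
  · rw [integral_undef hint]
    exact mul_nonneg (Nat.cast_nonneg _) (Real.log_nonneg hc)

/-- Expected regularized log-determinant bound: if the entries of the `N × D`
random matrix `X` are i.i.d. standard Gaussians, then for `α ≥ 0`,
`E[log det (α I_D + Xᵀ X)] ≤ D · log (N + α)`. -/
theorem stmt_2 (N D : ℕ) (α : ℝ) (hα : 0 ≤ α) :
    ∫ X : Fin N → Fin D → ℝ,
        Real.log ((α • (1 : Matrix (Fin D) (Fin D) ℝ) + (Matrix.of X)ᵀ * Matrix.of X).det)
        ∂(Measure.pi fun _ : Fin N => Measure.pi fun _ : Fin D => gaussianReal 0 1)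
      ≤ (D : ℝ) * Real.log (N + α) := by
  rcases N.eq_zero_or_pos with rfl | hN
  · simp [Real.log_pow]
  have hc : 1 ≤ (N : ℝ) + α := by
    have : (1 : ℝ) ≤ N := by exact_mod_cast hN
    linarith
  by_cases hsingular : α = 0 ∧ N < D
  · obtain ⟨rfl, hND⟩ := hsingular
    have hdet (X : Fin N → Fin D → ℝ) :
        ((0 : ℝ) • (1 : Matrix (Fin D) (Fin D) ℝ) + (Matrix.of X)ᵀ * Matrix.of X).det = 0 := by
      simpa using det_transpose_mul_self_eq_zero_of_card_lt (Matrix.of X) (by simpa using hND)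
    simp only [hdet, Real.log_zero, integral_zero]
    exact mul_nonneg (Nat.cast_nonneg D) (Real.log_nonneg hc)
  have hposDef := ae_posDef_smul_one_add_transpose_mul_self_pi_pi (N := N) (D := D)
    (gaussianReal_absolutelyContinuous 0 one_ne_zero) hα
    (hα.lt_or_eq.imp id fun h0 => not_lt.1 fun hlt => hsingular ⟨h0.symm, hlt⟩)
  simpa using integral_log_det_le hposDef
    (integrable_trace_smul_one_add_transpose_mul_self_pi_pi integrable_sq_gaussianReal α) hc
    (by rw [integral_trace_smul_one_add_transpose_mul_self_pi_pi integrable_sq_gaussianReal,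
      integral_sq_gaussianReal]; simp)
end

section
/- Let μ be the law of an N×D random matrix X whose entries are i.i.d. standard Gaussian N(0,1), and let c ≥ 0. Then ∫ log det(I_N + c·X(ω)·X(ω)ᵀ) dμ(ω) ≤ N · log(1 + c·D). In particular, for signal-to-noise ratio s ≥ 0 and c = s/D, the channel capacity C = (1/2)∫ log det(I_N + (s/D)·XXᵀ) dμ satisfies C ≤ (N/2)·log(s + 1); that is, in the over-parameterized regime D > N the channel capacity upper bound is independent of D (it saturates). -/
/-! The matrix `A = I + c X Xᵀ` is positive definite, so `log det A` is the sum of the logarithms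
of its eigenvalues. Bounding `log` by its tangent line at `t`, `log λ ≤ log t + λ / t - 1`, gives
`log det A ≤ N (log t - 1) + tr A / t`, which is affine in the squared entries of `X`. Taking
expectations with `E tr (X Xᵀ) = N D` and choosing `t = 1 + c D` yields `N log (1 + c D)`; this is
Jensen's inequality for the concave `log det`, made explicit. -/

open Matrix Real MeasureTheory ProbabilityTheory

lemma Real.log_le_log_add_div_sub_one {x t : ℝ} (hx : 0 < x) (ht : 0 < t) :
    log x ≤ log t + x / t - 1 := by
  have h := log_le_sub_one_of_pos (div_pos hx ht)
  rw [log_div hx.ne' ht.ne'] at h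
  linarith

lemma Matrix.PosDef.log_det_le_s4 {n : Type*} [Fintype n] [DecidableEq n] {A : Matrix n n ℝ}
    (hA : A.PosDef) {t : ℝ} (ht : 0 < t) :
    log A.det ≤ Fintype.card n * (log t - 1) + A.trace / t := by
  have hdet : A.det = ∏ i, hA.1.eigenvalues i := by simpa using hA.1.det_eq_prod_eigenvalues
  have htr : A.trace = ∑ i, hA.1.eigenvalues i := by simpa using hA.1.trace_eq_sum_eigenvalues
  rw [hdet, htr, log_prod fun i _ => (hA.eigenvalues_pos i).ne', Finset.sum_div]
  calc ∑ i, log (hA.1.eigenvalues i)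
      ≤ ∑ i, (log t - 1 + hA.1.eigenvalues i / t) := Finset.sum_le_sum fun i _ => by
        linarith [log_le_log_add_div_sub_one (hA.eigenvalues_pos i) ht]
    _ = Fintype.card n * (log t - 1) + ∑ i, hA.1.eigenvalues i / t := by
        simp only [Finset.sum_add_distrib, Finset.sum_sub_distrib, Finset.sum_const, Finset.card_univ,
          nsmul_eq_mul, mul_one, add_left_inj]
        ring

lemma Matrix.trace_mul_transpose_self {m n R : Type*} [Fintype m] [Fintype n] [Semiring R]
    (A : Matrix m n R) : (A * Aᵀ).trace = ∑ i, ∑ j, A i j ^ 2 := by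
  simp [trace, mul_apply, sq]

lemma ProbabilityTheory.integral_sq_gaussianReal_zero (v : NNReal) :
    ∫ x, x ^ 2 ∂gaussianReal 0 v = v := by
  rw [← variance_id_gaussianReal (μ := 0) (v := v),
    variance_of_integral_eq_zero aemeasurable_id integral_id_gaussianReal]
  rfl

lemma MeasureTheory.integrable_sum_comp_eval {ι α : Type*} [Fintype ι] [MeasurableSpace α]
    {ν : Measure α} [IsProbabilityMeasure ν] {f : α → ℝ} (hf : Integrable f ν) :
    Integrable (fun x : ι → α => ∑ i, f (x i)) (Measure.pi fun _ => ν) :=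
  integrable_finsetSum _ fun _ _ => integrable_comp_eval (X := fun _ => α) hf

lemma MeasureTheory.integral_sum_comp_eval {ι α : Type*} [Fintype ι] [MeasurableSpace α]
    {ν : Measure α} [IsProbabilityMeasure ν] {f : α → ℝ} (hf : Integrable f ν) :
    ∫ x : ι → α, ∑ i, f (x i) ∂Measure.pi (fun _ => ν) = Fintype.card ι * ∫ a, f a ∂ν := by
  rw [integral_finsetSum _ fun i _ => integrable_comp_eval (X := fun _ => α) hf]
  simp [integral_comp_eval (μ := fun _ : ι => ν) hf.aestronglyMeasurable]

lemma MeasureTheory.integral_sum_sq_pi_pi {ι κ : Type*} [Fintype ι] [Fintype κ]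
    {ν : Measure ℝ} [IsProbabilityMeasure ν] (h : Integrable (fun x => x ^ 2) ν) :
    ∫ X : ι → κ → ℝ, ∑ i, ∑ j, X i j ^ 2 ∂(Measure.pi fun _ => Measure.pi fun _ => ν)
      = Fintype.card ι * Fintype.card κ * ∫ x, x ^ 2 ∂ν := by
  rw [integral_sum_comp_eval (f := fun x : κ → ℝ => ∑ j, x j ^ 2) (integrable_sum_comp_eval h),
    integral_sum_comp_eval h, mul_assoc]

theorem integral_log_det_one_add_smul_mul_transpose_le {m n : Type*} [Fintype m] [Fintype n]
    [DecidableEq m] {c : ℝ} (hc : 0 ≤ c) :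
    ∫ X : m → n → ℝ, log ((1 : Matrix m m ℝ) + c • (of X * (of X)ᵀ)).det
        ∂(Measure.pi fun _ => Measure.pi fun _ => gaussianReal 0 1)
      ≤ Fintype.card m * log (1 + c * Fintype.card n) := by
  set μ := Measure.pi fun _ : m => Measure.pi fun _ : n => gaussianReal 0 1
  set t := 1 + c * Fintype.card n
  have ht : 0 < t := by positivity
  set bound : (m → n → ℝ) → ℝ :=
    fun X => Fintype.card m * (log t - 1 + 1 / t) + c / t * ∑ i, ∑ j, X i j ^ 2
  have hpoint : ∀ X, log ((1 : Matrix m m ℝ) + c • (of X * (of X)ᵀ)).det ≤ bound X := by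
    intro X
    have hA : ((1 : Matrix m m ℝ) + c • (of X * (of X)ᵀ)).PosDef :=
      PosDef.one.add_posSemidef (by simpa using (posSemidef_self_mul_conjTranspose (of X)).smul hc)
    refine (hA.log_det_le_s4 ht).trans_eq ?_
    rw [trace_add, trace_one, trace_smul, trace_mul_transpose_self]
    simp only [bound, of_apply, smul_eq_mul]
    ring
  have hsq : Integrable (fun x : ℝ => x ^ 2) (gaussianReal 0 1) :=
    (memLp_id_gaussianReal 2).integrable_sq
  have hint : Integrable bound μ :=
    (integrable_const _).add ((integrable_sum_comp_eval (integrable_sum_comp_eval hsq)).const_mul _)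
  have hmean : ∫ X, bound X ∂μ = Fintype.card m * log t := by
    rw [integral_add (integrable_const _)
      ((integrable_sum_comp_eval (integrable_sum_comp_eval hsq)).const_mul _), integral_const,
      integral_const_mul, integral_sum_sq_pi_pi hsq, integral_sq_gaussianReal_zero]
    simp only [probReal_univ, smul_eq_mul, one_mul, NNReal.coe_one, mul_one, t]
    field_simp
    ring
  by_cases hf : Integrable (fun X => log ((1 : Matrix m m ℝ) + c • (of X * (of X)ᵀ)).det) μ
  · exact (integral_mono hf hint hpoint).trans_eq hmean
  · -- the bound is nonnegative, so it also holds for the junk value `0` of a non-integrable integrand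
    rw [integral_undef hf]
    exact mul_nonneg (Nat.cast_nonneg _) (log_nonneg (le_add_of_nonneg_right (by positivity)))

/-- Channel-capacity upper bound (sample form / saturation): for i.i.d.
standard Gaussian entries, `E[log det (I_N + c X Xᵀ)] ≤ N log (1 + c D)` for
`c ≥ 0`; in particular with `c = s/D` the channel capacity
`C = (1/2) E[log det (I_N + (s/D) X Xᵀ)]` satisfies `C ≤ (N/2) log (s + 1)`,
a bound independent of `D`. -/
theorem stmt_4 (N D : ℕ) (c : ℝ) (hc : 0 ≤ c) :
    (∫ X : Fin N → Fin D → ℝ,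
        Real.log (((1 : Matrix (Fin N) (Fin N) ℝ) + c • (Matrix.of X * (Matrix.of X)ᵀ)).det)
        ∂(Measure.pi fun _ : Fin N => Measure.pi fun _ : Fin D => gaussianReal 0 1)
      ≤ (N : ℝ) * Real.log (1 + c * D)) ∧
    (∀ s : ℝ, 0 ≤ s →
      (1 / 2 : ℝ) * ∫ X : Fin N → Fin D → ℝ,
          Real.log (((1 : Matrix (Fin N) (Fin N) ℝ)
              + (s / D) • (Matrix.of X * (Matrix.of X)ᵀ)).det)
          ∂(Measure.pi fun _ : Fin N => Measure.pi fun _ : Fin D => gaussianReal 0 1)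
        ≤ (N / 2 : ℝ) * Real.log (s + 1)) := by
  refine ⟨by simpa using
    integral_log_det_one_add_smul_mul_transpose_le (m := Fin N) (n := Fin D) hc, fun s hs => ?_⟩
  have h := integral_log_det_one_add_smul_mul_transpose_le (m := Fin N) (n := Fin D)
    (c := s / D) (by positivity)
  have hlog : log (1 + s / D * D) ≤ log (s + 1) := by
    rcases eq_or_ne D 0 with rfl | hD
    · simpa using log_nonneg (by linarith)
    · rw [div_mul_cancel₀ _ (Nat.cast_ne_zero.mpr hD), add_comm]
  rw [Fintype.card_fin, Fintype.card_fin] at h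
  linarith [mul_le_mul_of_nonneg_left hlog (Nat.cast_nonneg N : (0 : ℝ) ≤ N)]
end
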